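/- Let A be the free group on generators α_1, ..., α_n and let E : A → ℤ⟨⟨X_1,...,X_n⟩⟩ be the Magnus expansion, defined by E(α_i) = 1 + X_i and E(α_i⁻¹) = 1 - X_i + X_i² - X_i³ + ⋯. Then for any element x in the q-th term A_q of the lower central series of A, E(x) = 1 + (terms of degree ≥ q). -/

import Mathlib

/-- The ring `ℤ⟨⟨X_i : i ∈ σ⟩⟩` of formal power series in non-commuting variables,
realized as coefficient functions on words (monomials) in the alphabet `σ`. -/
def NCSeries (σ : Type*) : Type _ := List σ → ℤ

instance {σ : Type*} : AddCommGroup (NCSeries σ) :=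
  inferInstanceAs (AddCommGroup (List σ → ℤ))

instance {σ : Type*} : One (NCSeries σ) :=
  ⟨fun w => match w with | [] => 1 | _ => 0⟩

/-- Multiplication of non-commutative power series: convolution over all
splittings of a word. -/
instance {σ : Type*} : Mul (NCSeries σ) :=
  ⟨fun f g => fun w => ∑ i ∈ Finset.range (w.length + 1), f (w.take i) * g (w.drop i)⟩

/-- The variable `X_j`, as a power series. -/
def Xvar {σ : Type*} [DecidableEq σ] (j : σ) : NCSeries σ :=
  fun w => if w = [j] then 1 else 0

/-- The Magnus expansion of a single letter: `α_i ↦ 1 + X_i` and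
`α_i⁻¹ ↦ 1 - X_i + X_i² - ⋯`. -/
def letterE {σ : Type*} [DecidableEq σ] (l : σ × Bool) : NCSeries σ := fun w =>
  if l.2 then (if w = [] ∨ w = [l.1] then (1 : ℤ) else 0)
  else (if ∀ a ∈ w, a = l.1 then ((-1) ^ w.length : ℤ) else 0)

/-- The Magnus expansion `E : FreeGroup σ → ℤ⟨⟨X_i : i ∈ σ⟩⟩`, computed as the
product of the Magnus expansions of the letters of the reduced word. -/
def magnus {σ : Type*} [DecidableEq σ] (x : FreeGroup σ) : NCSeries σ :=
  (FreeGroup.toWord x).foldr (fun l acc => letterE l * acc) 1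

/-- The `q`-th term of the lower central series, indexed as in Milnor's paper:
`lcs G 1 = G`, `lcs G (q+1) = [G, lcs G q]`. -/
def lcs (G : Type*) [Group G] (q : ℕ) : Subgroup G := (⊤ : Subgroup G).lowerCentralSeries (q - 1)

/-!
The Magnus expansion is multiplicative, so it is a homomorphism from the free group into the
units of `ℤ⟨⟨X⟩⟩`. For each `q`, the units `u` with `u - 1` of degree `≥ q` form a subgroup, and
it contains `E x` for every `x` when `q = 1`, since it contains the images `1 + X_i` of the
generators. From
`E ⁅x, y⁆ - 1 = ((E x - 1) (E y - 1) - (E y - 1) (E x - 1)) (E x)⁻¹ (E y)⁻¹`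
the commutator of elements of degrees `≥ p` and `≥ r` has degree `≥ p + r`, so the preimages of
these subgroups form a descending central series of the free group and therefore contain the
lower central series term by term.
-/

open scoped commutatorElement

namespace NCSeries

variable {σ : Type*}

theorem mul_apply (f g : NCSeries σ) (w : List σ) :
    (f * g) w = ∑ i ∈ Finset.range (w.length + 1), f (w.take i) * g (w.drop i) := rfl

theorem one_apply (w : List σ) : (1 : NCSeries σ) w = if w = [] then 1 else 0 := by
  cases w <;> rfl

theorem add_apply (f g : NCSeries σ) (w : List σ) : (f + g) w = f w + g w := rfl

theorem neg_apply (f : NCSeries σ) (w : List σ) : (-f) w = -f w := rfl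

theorem sub_apply (f g : NCSeries σ) (w : List σ) : (f - g) w = f w - g w := rfl

theorem zero_apply (w : List σ) : (0 : NCSeries σ) w = 0 := rfl

theorem one_mul' (f : NCSeries σ) : 1 * f = f := by
  funext w
  rw [mul_apply, Finset.sum_eq_single 0]
  · simp [one_apply]
  · intro i hi hi0
    have hpos : 0 < (w.take i).length := by
      simp only [Finset.mem_range, List.length_take] at hi ⊢; omega
    rw [one_apply, if_neg (List.ne_nil_of_length_pos hpos), zero_mul]
  · simp

theorem mul_one' (f : NCSeries σ) : f * 1 = f := by
  funext w
  rw [mul_apply, Finset.sum_eq_single w.length]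
  · simp [one_apply]
  · intro i hi hin
    have hpos : 0 < (w.drop i).length := by
      simp only [Finset.mem_range, List.length_drop] at hi ⊢; omega
    rw [one_apply, if_neg (List.ne_nil_of_length_pos hpos), mul_zero]
  · simp

theorem mul_assoc' (f g h : NCSeries σ) : f * g * h = f * (g * h) := by
  funext w
  set n := w.length
  have lhs : (f * g * h) w = ∑ j ∈ Finset.Ico 0 (n + 1), ∑ i ∈ Finset.Ico 0 (j + 1),
      f (w.take i) * (g ((w.drop i).take (j - i)) * h (w.drop j)) := by
    rw [mul_apply, Finset.range_eq_Ico]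
    refine Finset.sum_congr rfl fun j hj => ?_
    have hjn : j ≤ n := by rw [Finset.mem_Ico] at hj; omega
    rw [mul_apply, Finset.sum_mul, List.length_take, min_eq_left hjn, Finset.range_eq_Ico]
    refine Finset.sum_congr rfl fun i hi => ?_
    have hij : i ≤ j := by rw [Finset.mem_Ico] at hi; omega
    rw [List.take_take, min_eq_left hij, List.drop_take, mul_assoc]
  have rhs : (f * (g * h)) w = ∑ i ∈ Finset.Ico 0 (n + 1), ∑ j ∈ Finset.Ico i (n + 1),
      f (w.take i) * (g ((w.drop i).take (j - i)) * h (w.drop j)) := by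
    rw [mul_apply, Finset.range_eq_Ico]
    refine Finset.sum_congr rfl fun i hi => ?_
    have hin : i ≤ n := by rw [Finset.mem_Ico] at hi; omega
    rw [mul_apply, Finset.mul_sum, List.length_drop, Finset.sum_Ico_eq_sum_range,
      show n + 1 - i = n - i + 1 by omega]
    simp only [List.drop_drop, Nat.add_sub_cancel_left, n]
  rw [lhs, rhs, Finset.sum_Ico_Ico_comm]

instance : Ring (NCSeries σ) where
  __ := (inferInstance : AddCommGroup (NCSeries σ))
  mul_assoc := mul_assoc'
  one_mul := one_mul'
  mul_one := mul_one'
  left_distrib f g h := by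
    funext w; simp only [mul_apply, add_apply, mul_add, Finset.sum_add_distrib]
  right_distrib f g h := by
    funext w; simp only [mul_apply, add_apply, add_mul, Finset.sum_add_distrib]
  zero_mul f := by
    funext w; simp [mul_apply, zero_apply]
  mul_zero f := by
    funext w; simp [mul_apply, zero_apply]

theorem mul_apply_nil (f g : NCSeries σ) : (f * g) [] = f [] * g [] := by
  simp [mul_apply]

def filtration (q : ℕ) : AddSubgroup (NCSeries σ) where
  carrier := {f | ∀ w : List σ, w.length < q → f w = 0}
  zero_mem' _ _ := rfl
  add_mem' hf hg w hw := by simp [add_apply, hf w hw, hg w hw]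
  neg_mem' hf w hw := by simp [neg_apply, hf w hw]

theorem mul_mem_filtration {p q : ℕ} {f g : NCSeries σ} (hf : f ∈ filtration p)
    (hg : g ∈ filtration q) : f * g ∈ filtration (p + q) := by
  intro w hw
  refine Finset.sum_eq_zero fun i hi => ?_
  rw [Finset.mem_range] at hi
  rcases lt_or_ge i p with hip | hip
  · rw [hf _ (by rw [List.length_take]; omega), zero_mul]
  · rw [hg _ (by rw [List.length_drop]; omega), mul_zero]

theorem mul_mem_filtration_right {q : ℕ} {f : NCSeries σ} (hf : f ∈ filtration q)
    (g : NCSeries σ) : f * g ∈ filtration q :=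
  mul_mem_filtration (q := 0) hf fun _ h => absurd h (Nat.not_lt_zero _)

def unitsFiltration (q : ℕ) : Subgroup (NCSeries σ)ˣ where
  carrier := {u | (u : NCSeries σ) - 1 ∈ filtration q}
  one_mem' := by simp
  mul_mem' {u v} hu hv := by
    have hmul : ((u * v : (NCSeries σ)ˣ) : NCSeries σ) - 1 =
        (u - 1) * (v - 1) + ((u - 1) + (v - 1)) := by
      rw [Units.val_mul]; noncomm_ring
    rw [Set.mem_ofPred_eq, hmul]
    exact add_mem (mul_mem_filtration_right hu _) (add_mem hu hv)
  inv_mem' {u} hu := by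
    have hinv : ((u⁻¹ : (NCSeries σ)ˣ) : NCSeries σ) - 1 = -((u : NCSeries σ) - 1) * ↑u⁻¹ := by
      rw [neg_sub, sub_mul, Units.mul_inv, one_mul]
    rw [Set.mem_ofPred_eq, hinv]
    exact mul_mem_filtration_right (neg_mem hu) _

theorem commutator_mem_unitsFiltration {p r : ℕ} {u v : (NCSeries σ)ˣ}
    (hu : u ∈ unitsFiltration p) (hv : v ∈ unitsFiltration r) :
    ⁅u, v⁆ ∈ unitsFiltration (p + r) := by
  have hcomm : ((⁅u, v⁆ : (NCSeries σ)ˣ) : NCSeries σ) - 1 =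
      (u * v - v * u) * ↑u⁻¹ * ↑v⁻¹ := by
    simp [commutatorElement_def, sub_mul, mul_assoc]
  have hdiff : (u * v - v * u : NCSeries σ) = (u - 1) * (v - 1) - (v - 1) * (u - 1) := by
    noncomm_ring
  change _ - 1 ∈ filtration (p + r)
  rw [hcomm, hdiff, mul_assoc]
  refine mul_mem_filtration_right (sub_mem (mul_mem_filtration hu hv) ?_) _
  rw [add_comm]
  exact mul_mem_filtration hv hu

section Magnus

variable [DecidableEq σ]

theorem Xvar_mul_apply_nil (a : σ) (f : NCSeries σ) : (Xvar a * f) [] = 0 := by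
  simp [mul_apply_nil, Xvar]

theorem Xvar_mul_apply_cons (a x : σ) (f : NCSeries σ) (w : List σ) :
    (Xvar a * f) (x :: w) = if x = a then f w else 0 := by
  rw [mul_apply, Finset.sum_eq_single 1]
  · by_cases hx : x = a <;> simp [Xvar, hx]
  · intro i hi hi1
    rw [Xvar, if_neg, zero_mul]
    intro h
    have := congrArg List.length h
    simp only [Finset.mem_range, List.length_take, List.length_cons, List.length_nil] at hi this
    omega
  · simp

theorem mul_Xvar_apply_concat (a x : σ) (f : NCSeries σ) (w : List σ) :
    (f * Xvar a) (w ++ [x]) = if x = a then f w else 0 := by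
  rw [mul_apply, Finset.sum_eq_single w.length]
  · by_cases hx : x = a <;> simp [Xvar, hx]
  · intro i hi hiw
    rw [Xvar, if_neg, mul_zero]
    intro h
    have := congrArg List.length h
    simp only [Finset.mem_range, List.length_drop, List.length_cons, List.length_append,
      List.length_nil] at hi this
    omega
  · simp

theorem letterE_true (a : σ) : letterE (a, true) = 1 + Xvar a := by
  funext w
  rcases w with _ | ⟨x, _ | ⟨y, w⟩⟩ <;> simp [letterE, Xvar, add_apply, one_apply]

theorem letterE_false_apply_cons (a x : σ) (w : List σ) :
    letterE (a, false) (x :: w) = if x = a then -letterE (a, false) w else 0 := by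
  simp only [letterE, List.forall_mem_cons, List.length_cons, pow_succ]
  split_ifs <;> grind

theorem letterE_false_apply_concat (a x : σ) (w : List σ) :
    letterE (a, false) (w ++ [x]) = if x = a then -letterE (a, false) w else 0 := by
  simp only [letterE, List.forall_mem_append, List.forall_mem_singleton, List.length_append,
    List.length_singleton, pow_succ]
  split_ifs <;> grind

theorem letterE_false_add_Xvar_mul (a : σ) :
    letterE (a, false) + Xvar a * letterE (a, false) = 1 := by
  funext w
  rcases w with _ | ⟨x, w⟩
  · simp [add_apply, Xvar_mul_apply_nil, letterE, one_apply]
  · rw [add_apply, Xvar_mul_apply_cons, letterE_false_apply_cons]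
    split_ifs <;> simp [one_apply]

theorem letterE_false_add_mul_Xvar (a : σ) :
    letterE (a, false) + letterE (a, false) * Xvar a = 1 := by
  funext w
  rcases w.eq_nil_or_concat' with rfl | ⟨w, x, rfl⟩
  · simp [add_apply, mul_apply_nil, Xvar, letterE, one_apply]
  · rw [add_apply, mul_Xvar_apply_concat, letterE_false_apply_concat]
    split_ifs <;> simp [one_apply]

def letterUnit (a : σ) : (NCSeries σ)ˣ where
  val := letterE (a, true)
  inv := letterE (a, false)
  val_inv := by rw [letterE_true, add_mul, one_mul, letterE_false_add_Xvar_mul]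
  inv_val := by rw [letterE_true, mul_add, mul_one, letterE_false_add_mul_Xvar]

def magnusHom : FreeGroup σ →* (NCSeries σ)ˣ := FreeGroup.lift letterUnit

theorem letterE_eq_letterUnit (l : σ × Bool) :
    letterE l = ↑(cond l.2 (letterUnit l.1) (letterUnit l.1)⁻¹) := by
  rcases l with ⟨a, _ | _⟩ <;> rfl

theorem magnus_eq_magnusHom (x : FreeGroup σ) : magnus x = magnusHom x := by
  conv_rhs => rw [← FreeGroup.mk_toWord (x := x)]
  rw [magnus, magnusHom, FreeGroup.lift_mk]
  induction x.toWord with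
  | nil => rfl
  | cons l L ih => rw [List.foldr_cons, ih, List.map_cons, List.prod_cons, Units.val_mul,
      letterE_eq_letterUnit]

theorem magnusHom_mem_unitsFiltration_one (x : FreeGroup σ) :
    magnusHom x ∈ unitsFiltration 1 := by
  refine FreeGroup.range_lift_le ?_ ⟨x, rfl⟩
  rintro _ ⟨a, rfl⟩ w hw
  rw [List.length_eq_zero_iff.1 (Nat.lt_one_iff.1 hw)]
  simp [letterUnit, letterE_true, sub_apply, add_apply, Xvar]

theorem isDescendingCentralSeries_comap_magnusHom :
    Subgroup.IsDescendingCentralSeries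
      fun n => (unitsFiltration (n + 1)).comap (magnusHom (σ := σ)) := by
  refine ⟨eq_top_iff.2 fun x _ => magnusHom_mem_unitsFiltration_one x, fun x n hx g => ?_⟩
  rw [Subgroup.mem_comap, map_commutatorElement]
  exact commutator_mem_unitsFiltration hx (magnusHom_mem_unitsFiltration_one g)

theorem magnus_sub_one_mem_filtration {n : ℕ} {x : FreeGroup σ}
    (hx : x ∈ (⊤ : Subgroup (FreeGroup σ)).lowerCentralSeries n) :
    magnus x - 1 ∈ filtration (n + 1) := by
  rw [magnus_eq_magnusHom]
  exact Subgroup.descending_central_series_ge_lower _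
    isDescendingCentralSeries_comap_magnusHom n hx

end Magnus

end NCSeries

theorem stmt2 (n q : ℕ) (x : FreeGroup (Fin n))
    (hx : x ∈ lcs (FreeGroup (Fin n)) q) :
    magnus x [] = 1 ∧ ∀ w : List (Fin n), w ≠ [] → w.length < q → magnus x w = 0 := by
  have hconst := NCSeries.magnus_sub_one_mem_filtration (n := 0) (Subgroup.mem_top x) [] one_pos
  have hdeg := NCSeries.magnus_sub_one_mem_filtration hx
  refine ⟨by simpa [NCSeries.sub_apply, NCSeries.one_apply, sub_eq_zero] using hconst,
    fun w hw hwq => ?_⟩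
  simpa [NCSeries.sub_apply, NCSeries.one_apply, hw] using hdeg w (by omega)
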